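/- Let X, Y be Banach spaces and M = [[A,B],[C,D]] a bounded operator on X ⊕ Y, where A and D have group inverses. If CA^π = 0, BD^π = 0, A^π BC = 0, BCA = 0, and DC = CA^#BC, then M has a group inverse. -/

import Mathlib

/-!
Since `C = C A A^#`, we get `BC = BCA A^# = 0` and then `DC = C A^# BC = 0`. Split
`M = P + Q` with `P = [[A, 0], [C, 0]]` and `Q = [[0, B], [0, D]]`. Writing `P = u v` with
`u = (A, C) : X → X × Y`, `v = fst`, we have `v u = A`, so Cline's formula makes `P` group
invertible because `C A^π = 0`; likewise `Q`, because `B D^π = 0`. Finally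
`QP = [[BC, 0], [DC, 0]] = 0`, and the sum of two group invertible elements `a`, `b` of a ring
with `ba = 0` is group invertible, with group inverse `a^π b^# + a^# b^π`.
-/

/-- `x` is a group inverse of `a`. -/
def IsGroupInv {R : Type*} [Ring R] (a x : R) : Prop :=
  x * a * x = x ∧ a * x = x * a ∧ a * x * a = a

namespace IsGroupInv

variable {R : Type*} [Ring R] {a b x y c : R}

theorem mul_mul_self (h : IsGroupInv a x) : a * (x * x) = x := by
  rw [← mul_assoc, h.2.1, h.1]

theorem mul_self_mul (h : IsGroupInv a x) : x * x * a = x := by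
  rw [mul_assoc, ← h.2.1, ← mul_assoc, h.1]

theorem mul_mul_inv (h : IsGroupInv a x) : a * (a * x) = a := by
  rw [h.2.1, ← mul_assoc, h.2.2]

theorem isIdempotentElem (h : IsGroupInv a x) : IsIdempotentElem (a * x) := by
  rw [IsIdempotentElem, ← mul_assoc, h.2.2]

theorem mul_inv_eq_zero (h : IsGroupInv a x) (hc : c * a = 0) : c * x = 0 := by
  rw [← h.mul_mul_self, ← mul_assoc, hc, zero_mul]

theorem inv_mul_eq_zero (h : IsGroupInv a x) (hc : a * c = 0) : x * c = 0 := by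
  rw [← h.mul_self_mul, mul_assoc, hc, mul_zero]

theorem add_of_mul_eq_zero (ha : IsGroupInv a x) (hb : IsGroupInv b y) (hba : b * a = 0) :
    IsGroupInv (a + b) ((1 - a * x) * y + x * (1 - b * y)) := by
  have hbx : b * x = 0 := ha.mul_inv_eq_zero hba
  have hya : y * a = 0 := hb.inv_mul_eq_zero hba
  have hyx : y * x = 0 := ha.mul_inv_eq_zero hya
  set p := a * x with hp
  set q := b * y with hq
  set w := (1 - p) * y + x * (1 - q)
  set e := p + (1 - p) * q
  have hqa : q * a = 0 := by rw [hq, mul_assoc, hya, mul_zero]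
  have hqb : q * b = b := hb.2.2
  have hqx : q * x = 0 := by rw [hq, mul_assoc, hyx, mul_zero]
  have hqy : q * y = y := by rw [hq, hb.2.1, hb.1]
  have hpa : p * a = a := ha.2.2
  have hpx : p * x = x := by rw [hp, ha.2.1, ha.1]
  have hMw : (a + b) * w = e := by
    have h1 : (a + b) * (1 - p) = b := by
      rw [add_mul, mul_one_sub, mul_one_sub, ha.mul_mul_inv, ← mul_assoc, hba, zero_mul]
      abel
    have h2 : (a + b) * x = p := by rw [add_mul, hbx, add_zero]
    calc (a + b) * w = (a + b) * (1 - p) * y + (a + b) * x * (1 - q) := by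
          simp only [w, mul_add, mul_assoc]
      _ = e := by
          rw [h1, h2]
          show q + p * (1 - q) = p + (1 - p) * q
          noncomm_ring
  have hwM : w * (a + b) = e := by
    have h1 : y * (a + b) = q := by rw [mul_add, hya, zero_add, ← hb.2.1]
    have h2 : (1 - q) * (a + b) = a := by
      rw [one_sub_mul, mul_add, hqa, hqb]; abel
    calc w * (a + b) = (1 - p) * (y * (a + b)) + x * ((1 - q) * (a + b)) := by
          simp only [w, add_mul, mul_assoc]
      _ = e := by rw [h1, h2, ← ha.2.1, add_comm]
  have heM : e * (a + b) = a + b := by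
    have h1 : q * (a + b) = b := by rw [mul_add, hqa, hqb, zero_add]
    calc e * (a + b) = p * (a + b) + (1 - p) * (q * (a + b)) := by
          rw [add_mul, mul_assoc (1 - p)]
      _ = a + b := by rw [h1, mul_add, hpa]; noncomm_ring
  have hew : e * w = w := by
    have h1 : e * (1 - p) = (1 - p) * q := by
      have hqp : q * p = 0 := by rw [hp, ← mul_assoc, hqa, zero_mul]
      rw [add_mul, ha.isIdempotentElem.mul_one_sub_self, zero_add, mul_assoc, mul_one_sub, hqp,
        sub_zero]
    have h2 : e * x = x := by
      rw [add_mul, hpx, mul_assoc, hqx, mul_zero, add_zero]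
    calc e * w = e * (1 - p) * y + e * x * (1 - q) := by simp only [w, mul_add, mul_assoc]
      _ = w := by rw [h1, h2, mul_assoc, hqy]
  exact ⟨by rw [hwM, hew], by rw [hMw, hwM], by rw [hMw, heM]⟩

end IsGroupInv

open ContinuousLinearMap

-- Cline's formula `(uv)^# = u ((vu)^#)^2 v`.
theorem IsGroupInv.comp_swap {R E F : Type*} [Ring R]
    [TopologicalSpace E] [AddCommGroup E] [Module R E] [IsTopologicalAddGroup E]
    [TopologicalSpace F] [AddCommGroup F] [Module R F] [IsTopologicalAddGroup F]
    {u : E →L[R] F} {v : F →L[R] E} {s : E →L[R] E} (hs : IsGroupInv (v ∘L u) s)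
    (hu : u ∘L (v ∘L u) ∘L s = u) :
    IsGroupInv (u ∘L v) (u ∘L (s * s) ∘L v) := by
  have hMW : u ∘L v * (u ∘L (s * s) ∘L v) = u ∘L s ∘L v :=
    calc u ∘L v * (u ∘L (s * s) ∘L v) = u ∘L (v ∘L u * (s * s)) ∘L v := by
          simp only [mul_def, comp_assoc]
      _ = u ∘L s ∘L v := by rw [hs.mul_mul_self]
  have hWM : u ∘L (s * s) ∘L v * u ∘L v = u ∘L s ∘L v :=
    calc u ∘L (s * s) ∘L v * u ∘L v = u ∘L (s * s * v ∘L u) ∘L v := by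
          simp only [mul_def, comp_assoc]
      _ = u ∘L s ∘L v := by rw [hs.mul_self_mul]
  refine ⟨?_, by rw [hMW, hWM], ?_⟩
  · calc u ∘L (s * s) ∘L v * u ∘L v * (u ∘L (s * s) ∘L v)
          = u ∘L (s * (v ∘L u * (s * s))) ∘L v := by
          rw [hWM]; simp only [mul_def, comp_assoc]
      _ = u ∘L (s * s) ∘L v := by rw [hs.mul_mul_self]
  · calc u ∘L v * (u ∘L (s * s) ∘L v) * u ∘L v = u ∘L (v ∘L u * s) ∘L v := by
          rw [hMW, hs.2.1]; simp only [mul_def, comp_assoc]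
      _ = u ∘L v := by rw [mul_def, ← comp_assoc, hu]

theorem stmt_18_general {X Y : Type*}
    [NormedAddCommGroup X] [NormedSpace ℂ X]
    [NormedAddCommGroup Y] [NormedSpace ℂ Y]
    (A As : X →L[ℂ] X) (B : Y →L[ℂ] X) (C : X →L[ℂ] Y) (D Ds : Y →L[ℂ] Y)
    (hA : IsGroupInv A As) (hD : IsGroupInv D Ds)
    (h1 : C ∘L (1 - A * As) = 0)
    (h2 : B ∘L (1 - D * Ds) = 0)
    (h4 : (B ∘L C) ∘L A = 0)
    (h5 : D ∘L C = (C ∘L (As ∘L B)) ∘L C) :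
    ∃ W, IsGroupInv
        (((A ∘L ContinuousLinearMap.fst ℂ X Y) + (B ∘L ContinuousLinearMap.snd ℂ X Y)).prod
          ((C ∘L ContinuousLinearMap.fst ℂ X Y) + (D ∘L ContinuousLinearMap.snd ℂ X Y))) W := by
  have hC : C ∘L (A * As) = C :=
    (sub_eq_zero.mp (by rwa [comp_sub, one_def, comp_id] at h1)).symm
  have hB : B ∘L (D * Ds) = B :=
    (sub_eq_zero.mp (by rwa [comp_sub, one_def, comp_id] at h2)).symm
  have hBC : B ∘L C = 0 := by rw [← hC, ← comp_assoc, mul_def, ← comp_assoc, h4, zero_comp]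
  have hDC : D ∘L C = 0 := by rw [h5, comp_assoc, comp_assoc, hBC, comp_zero, comp_zero]
  have hP : IsGroupInv (A.prod C ∘L fst ℂ X Y) (A.prod C ∘L (As * As) ∘L fst ℂ X Y) := by
    refine IsGroupInv.comp_swap (by rwa [fst_comp_prod]) ?_
    change (A * (A * As)).prod (C ∘L (A * As)) = _
    rw [hA.mul_mul_inv, hC]
  have hQ : IsGroupInv (B.prod D ∘L snd ℂ X Y) (B.prod D ∘L (Ds * Ds) ∘L snd ℂ X Y) := by
    refine IsGroupInv.comp_swap (by rwa [snd_comp_prod]) ?_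
    change (B ∘L (D * Ds)).prod (D * (D * Ds)) = _
    rw [hD.mul_mul_inv, hB]
  have hQP : B.prod D ∘L snd ℂ X Y * A.prod C ∘L fst ℂ X Y = 0 := by
    change (B ∘L C).prod (D ∘L C) ∘L fst ℂ X Y = 0
    rw [hBC, hDC]
    rfl
  have hM : ((A ∘L fst ℂ X Y) + (B ∘L snd ℂ X Y)).prod
      ((C ∘L fst ℂ X Y) + (D ∘L snd ℂ X Y)) = A.prod C ∘L fst ℂ X Y + B.prod D ∘L snd ℂ X Y := by
    ext <;> simp
  exact ⟨_, hM ▸ hP.add_of_mul_eq_zero hQ hQP⟩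

theorem stmt_18 {X Y : Type*}
    [NormedAddCommGroup X] [NormedSpace ℂ X] [CompleteSpace X]
    [NormedAddCommGroup Y] [NormedSpace ℂ Y] [CompleteSpace Y]
    (A As : X →L[ℂ] X) (B : Y →L[ℂ] X) (C : X →L[ℂ] Y) (D Ds : Y →L[ℂ] Y)
    (hA : IsGroupInv A As) (hD : IsGroupInv D Ds)
    (h1 : C ∘L (1 - A * As) = 0)
    (h2 : B ∘L (1 - D * Ds) = 0)
    (h3 : (1 - A * As) * (B ∘L C) = 0)
    (h4 : (B ∘L C) ∘L A = 0)
    (h5 : D ∘L C = (C ∘L (As ∘L B)) ∘L C) :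
    ∃ W, IsGroupInv
        (((A ∘L ContinuousLinearMap.fst ℂ X Y) + (B ∘L ContinuousLinearMap.snd ℂ X Y)).prod
          ((C ∘L ContinuousLinearMap.fst ℂ X Y) + (D ∘L ContinuousLinearMap.snd ℂ X Y))) W :=
  stmt_18_general A As B C D Ds hA hD h1 h2 h4 h5
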